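/- In the Round-Robin mechanism with n agents and m = kn goods, fix agent i, profile ≻_{−i}, and two reports ≻_i, ≻'_i of agent i. Let S'_r denote the goods allocated before agent i's (r+1)-th pick under (≻'_i, ≻_{−i}), and let (A_1,…,A_n) be the allocation under (≻_i, ≻_{−i}). Then for every r ∈ [k] and every agent j, |A_j ∩ (S'_{r−1} \ S'_0)| ≤ 2(r−1). -/

import Mathlib

/-! Round-Robin mechanism: given reported strict total orders (duplicate-free lists
ranking the goods), in turns `t = 0, 1, 2, …` agent `t % n` receives her reported-top
good among those not yet allocated. -/

variable {G : Type*} [DecidableEq G]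

/-- Goods remaining after `t` turns of the Round-Robin mechanism. -/
def rrRemaining {n : ℕ} (hn : 0 < n) (pref : Fin n → List G) (goods : Finset G) :
    ℕ → Finset G
  | 0 => goods
  | t + 1 =>
    let S := rrRemaining hn pref goods t
    match (pref ⟨t % n, Nat.mod_lt t hn⟩).find? (fun g => decide (g ∈ S)) with
    | none => S
    | some g => S.erase g

/-- The good picked at turn `t` (agent `t % n` picks her reported-top available good). -/
def rrPicked {n : ℕ} (hn : 0 < n) (pref : Fin n → List G) (goods : Finset G) (t : ℕ) :
    Option G :=
  (pref ⟨t % n, Nat.mod_lt t hn⟩).find? fun g => decide (g ∈ rrRemaining hn pref goods t)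

/-- The bundle allocated to agent `i` by Round-Robin. -/
def rrBundle {n : ℕ} (hn : 0 < n) (pref : Fin n → List G) (goods : Finset G) (i : Fin n) :
    Finset G :=
  ((Finset.range goods.card).filter fun t => t % n = i.val).biUnion fun t =>
    (rrPicked hn pref goods t).toFinset

/-- Goods allocated strictly before turn `t`. -/
def rrAllocatedBefore {n : ℕ} (hn : 0 < n) (pref : Fin n → List G) (goods : Finset G)
    (t : ℕ) : Finset G := goods \ rrRemaining hn pref goods t

/-- A valid report is a strict total order on the goods: a duplicate-free list
enumerating exactly the goods. -/
def ValidReport (goods : Finset G) (l : List G) : Prop :=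
  l.Nodup ∧ ∀ g, g ∈ l ↔ g ∈ goods

section Helpers
variable {n : ℕ} (hn : 0 < n) (pref : Fin n → List G) (goods : Finset G)

lemma rrRemaining_succ (t : ℕ) :
    rrRemaining hn pref goods (t+1) =
      match (pref ⟨t % n, Nat.mod_lt t hn⟩).find?
          (fun g => decide (g ∈ rrRemaining hn pref goods t)) with
      | none => rrRemaining hn pref goods t
      | some g => (rrRemaining hn pref goods t).erase g := rfl

lemma rrRemaining_succ_subset (t : ℕ) :
    rrRemaining hn pref goods (t+1) ⊆ rrRemaining hn pref goods t := by
  rw [rrRemaining_succ]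
  cases h : (pref ⟨t % n, Nat.mod_lt t hn⟩).find?
      (fun g => decide (g ∈ rrRemaining hn pref goods t)) with
  | none => simp
  | some g => simp [Finset.erase_subset]

lemma rrRemaining_antitone {s t : ℕ} (h : s ≤ t) :
    rrRemaining hn pref goods t ⊆ rrRemaining hn pref goods s := by
  induction t with
  | zero => simp_all
  | succ t ih =>
    rcases Nat.lt_or_ge s (t+1) with h' | h'
    · exact (rrRemaining_succ_subset hn pref goods t).trans (ih (Nat.lt_succ_iff.mp h'))
    · have : s = t + 1 := le_antisymm h h'
      subst this; rfl

lemma rrRemaining_subset_goods (t : ℕ) :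
    rrRemaining hn pref goods t ⊆ goods :=
  rrRemaining_antitone hn pref goods (Nat.zero_le t)

lemma find?_first {l : List G} {p q : G → Bool} {g g' : G}
    (hg : l.find? p = some g) (hg' : l.find? q = some g')
    (hpg' : p g' = true) (hqg : q g = true) : g = g' := by
  induction l with
  | nil => simp at hg
  | cons a l ih =>
    by_cases hpa : p a = true
    · rw [List.find?_cons_of_pos hpa] at hg
      obtain rfl : a = g := by simpa using hg
      by_cases hqa : q a = true
      · rw [List.find?_cons_of_pos hqa] at hg'
        obtain rfl : a = g' := by simpa using hg'
        rfl
      · exact absurd hqg hqa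
    · rw [List.find?_cons_of_neg (by simpa using hpa)] at hg
      by_cases hqa : q a = true
      · rw [List.find?_cons_of_pos hqa] at hg'
        obtain rfl : a = g' := by simpa using hg'
        exact absurd hpg' hpa
      · rw [List.find?_cons_of_neg (by simpa using hqa)] at hg'
        exact ih hg hg'

lemma find?_none_empty {l : List G} {S : Finset G} (hS : S ⊆ goods)
    (hv : ValidReport goods l)
    (h : l.find? (fun g => decide (g ∈ S)) = none) : S = ∅ := by
  rw [List.find?_eq_none] at h
  ext g
  simp only [Finset.notMem_empty, iff_false]
  intro hg
  exact absurd (by simpa using hg) (by simpa using h g ((hv.2 g).mpr (hS hg)))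

lemma rrRemaining_picked {t : ℕ} {g : G} (h : rrPicked hn pref goods t = some g) :
    rrRemaining hn pref goods (t+1) = (rrRemaining hn pref goods t).erase g := by
  rw [rrRemaining_succ]
  rw [rrPicked] at h
  rw [h]

lemma mem_of_picked {t : ℕ} {g : G} (h : rrPicked hn pref goods t = some g) :
    g ∈ rrRemaining hn pref goods t := by
  have := List.find?_some h
  simpa using this

lemma not_mem_succ_of_picked {t : ℕ} {g : G} (h : rrPicked hn pref goods t = some g) :
    g ∉ rrRemaining hn pref goods (t+1) := by
  rw [rrRemaining_picked hn pref goods h]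
  simp

lemma prefix_eq {pref' : Fin n → List G} {i : Fin n}
    (hagree : ∀ j, j ≠ i → pref j = pref' j) :
    ∀ t, t ≤ i.val → rrRemaining hn pref goods t = rrRemaining hn pref' goods t := by
  intro t ht
  induction t with
  | zero => rfl
  | succ t ih =>
    have ht' : t < i.val := ht
    have hmod : t % n = t := Nat.mod_eq_of_lt (ht'.trans i.isLt)
    have hne : (⟨t % n, Nat.mod_lt t hn⟩ : Fin n) ≠ i := by
      intro h
      exact absurd (congrArg Fin.val h) (by simp [hmod]; omega)
    rw [rrRemaining_succ, rrRemaining_succ, ih ht'.le, hagree _ hne]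

lemma diff_card_le {pref' : Fin n → List G} {i : Fin n}
    (hagree : ∀ j, j ≠ i → pref j = pref' j)
    (hvalid : ∀ j, ValidReport goods (pref j)) (hvalid' : ∀ j, ValidReport goods (pref' j)) :
    ∀ t, (rrRemaining hn pref goods t \ rrRemaining hn pref' goods t).card ≤
      ((Finset.range t).filter (fun s => s % n = i.val)).card := by
  intro t
  induction t with
  | zero =>
      show (goods \ goods).card ≤ _
      simp
  | succ t ih =>
    set R := rrRemaining hn pref goods t with hR
    set R' := rrRemaining hn pref' goods t with hR'
    have hRg : R ⊆ goods := rrRemaining_subset_goods hn pref goods t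
    have hR'g : R' ⊆ goods := rrRemaining_subset_goods hn pref' goods t
    have hrange : (Finset.range (t+1)).filter (fun s => s % n = i.val)
        = if t % n = i.val then insert t ((Finset.range t).filter (fun s => s % n = i.val))
          else (Finset.range t).filter (fun s => s % n = i.val) := by
      rw [Finset.range_add_one, Finset.filter_insert]
    by_cases hti : t % n = i.val
    · -- agent i's turn: difference grows by at most 1
      have hsub : rrRemaining hn pref goods (t+1) \ rrRemaining hn pref' goods (t+1)
          ⊆ (R \ R') ∪ (R' \ rrRemaining hn pref' goods (t+1)) := by
        intro x hx
        rw [Finset.mem_sdiff] at hx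
        have hxR : x ∈ R := rrRemaining_succ_subset hn pref goods t hx.1
        by_cases hxR' : x ∈ R'
        · exact Finset.mem_union_right _ (Finset.mem_sdiff.mpr ⟨hxR', hx.2⟩)
        · exact Finset.mem_union_left _ (Finset.mem_sdiff.mpr ⟨hxR, hxR'⟩)
      have hcard1 : (R' \ rrRemaining hn pref' goods (t+1)).card ≤ 1 := by
        rw [rrRemaining_succ]
        cases h : (pref' ⟨t % n, Nat.mod_lt t hn⟩).find? (fun g => decide (g ∈ R')) with
        | none => simp [← hR']
        | some g =>
          rw [← hR']
          calc (R' \ R'.erase g).card ≤ ({g} : Finset G).card :=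
                Finset.card_le_card (by intro x hx; simp at hx ⊢; tauto)
            _ = 1 := Finset.card_singleton g
      calc (rrRemaining hn pref goods (t+1) \ rrRemaining hn pref' goods (t+1)).card
          ≤ _ := Finset.card_le_card hsub
        _ ≤ (R \ R').card + (R' \ rrRemaining hn pref' goods (t+1)).card :=
            Finset.card_union_le _ _
        _ ≤ ((Finset.range t).filter (fun s => s % n = i.val)).card + 1 :=
            Nat.add_le_add ih hcard1
        _ ≤ _ := by
            rw [hrange, if_pos hti]
            have : t ∉ (Finset.range t).filter (fun s => s % n = i.val) := by simp
            rw [Finset.card_insert_of_notMem this]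
    · -- another agent's turn: same list used in both runs
      have hne : (⟨t % n, Nat.mod_lt t hn⟩ : Fin n) ≠ i := by
        intro h; exact hti (congrArg Fin.val h)
      have hlist : pref ⟨t % n, Nat.mod_lt t hn⟩ = pref' ⟨t % n, Nat.mod_lt t hn⟩ :=
        hagree _ hne
      set l := pref ⟨t % n, Nat.mod_lt t hn⟩ with hl
      have hvl : ValidReport goods l := hvalid _
      rw [hrange, if_neg hti]
      have key : (rrRemaining hn pref goods (t+1) \ rrRemaining hn pref' goods (t+1)).card
          ≤ (R \ R').card := by
        rw [rrRemaining_succ hn pref goods t, rrRemaining_succ hn pref' goods t,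
          ← hlist, ← hR, ← hR']
        cases hf : l.find? (fun g => decide (g ∈ R)) with
        | none =>
          have : R = ∅ := find?_none_empty goods hRg hvl hf
          simp [this]
        | some g =>
          cases hf' : l.find? (fun g => decide (g ∈ R')) with
          | none =>
            have : R' = ∅ := find?_none_empty goods hR'g hvl hf'
            apply Finset.card_le_card
            simp only [this]
            intro x hx
            rw [Finset.mem_sdiff] at hx ⊢
            exact ⟨Finset.erase_subset _ _ hx.1, by simp⟩
          | some g' =>
            have hgR : g ∈ R := by simpa using List.find?_some hf
            have hg'R' : g' ∈ R' := by simpa using List.find?_some hf'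
            by_cases hgg' : g = g'
            · subst hgg'
              apply Finset.card_le_card
              intro x hx
              rw [Finset.mem_sdiff] at hx ⊢
              refine ⟨Finset.erase_subset _ _ hx.1, fun hxR' => hx.2 ?_⟩
              have hxg : x ≠ g := Finset.ne_of_mem_erase hx.1
              exact Finset.mem_erase.mpr ⟨hxg, hxR'⟩
            by_cases hg'R : g' ∈ R
            · -- g ∈ R \ R', and difference trades g for g'
              have hgR' : g ∉ R' := by
                intro hgR'
                exact hgg' (find?_first hf hf' (by simpa using hg'R) (by simpa using hgR'))
              have hsub2 : R.erase g \ R'.erase g' ⊆ insert g' ((R \ R').erase g) := by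
                intro x hx
                rw [Finset.mem_sdiff, Finset.mem_erase, Finset.mem_erase] at hx
                by_cases hxg' : x = g'
                · simp [hxg']
                · refine Finset.mem_insert_of_mem (Finset.mem_erase.mpr ⟨hx.1.1, ?_⟩)
                  rw [Finset.mem_sdiff]
                  exact ⟨hx.1.2, fun hxR' => hx.2 ⟨hxg', hxR'⟩⟩
              have hgmem : g ∈ R \ R' := Finset.mem_sdiff.mpr ⟨hgR, hgR'⟩
              calc (R.erase g \ R'.erase g').card
                  ≤ (insert g' ((R \ R').erase g)).card := Finset.card_le_card hsub2
                _ ≤ ((R \ R').erase g).card + 1 := Finset.card_insert_le _ _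
                _ = ((R \ R').card - 1) + 1 := by rw [Finset.card_erase_of_mem hgmem]
                _ = (R \ R').card := Nat.sub_add_cancel (Finset.card_pos.mpr ⟨g, hgmem⟩)
            · apply Finset.card_le_card
              intro x hx
              rw [Finset.mem_sdiff, Finset.mem_erase] at hx
              rw [Finset.mem_sdiff]
              refine ⟨hx.1.2, fun hxR' => ?_⟩
              have hxg' : x ≠ g' := by rintro rfl; exact hg'R hx.1.2
              exact hx.2 (Finset.mem_erase.mpr ⟨hxg', hxR'⟩)
      exact key.trans ih

end Helpers

lemma own_turns_card {n r : ℕ} {i : ℕ} (hn : 0 < n) (hi : i < n) :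
    ((Finset.range (r * n + i)).filter (fun s => s % n = i)).card ≤ r := by
  have hsub : (Finset.range (r * n + i)).filter (fun s => s % n = i)
      ⊆ (Finset.range r).image (fun q => q * n + i) := by
    intro s hs
    rw [Finset.mem_filter, Finset.mem_range] at hs
    have heq : s = n * (s / n) + i := by
      rw [← hs.2]; exact (Nat.div_add_mod s n).symm
    rw [Finset.mem_image]
    refine ⟨s / n, Finset.mem_range.mpr ?_, ?_⟩
    · by_contra h
      push_neg at h
      have h3 : r * n ≤ n * (s / n) := by
        rw [Nat.mul_comm n (s / n)]; exact Nat.mul_le_mul_right n h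
      omega
    · rw [Nat.mul_comm]; omega
  calc _ ≤ ((Finset.range r).image (fun q => q * n + i)).card := Finset.card_le_card hsub
    _ ≤ r := (Finset.card_image_le).trans (by simp)

lemma other_turns_card {n r : ℕ} {i j : ℕ} (hn : 0 < n) (hi : i < n) (hj : j < n) :
    ((Finset.range (r * n + i)).filter (fun t => t % n = j ∧ i ≤ t)).card ≤ r := by
  have hsub : (Finset.range (r * n + i)).filter (fun t => t % n = j ∧ i ≤ t)
      ⊆ (Finset.range r).image (fun q => (if j < i then q + 1 else q) * n + j) := by
    intro t ht
    rw [Finset.mem_filter, Finset.mem_range] at ht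
    obtain ⟨ht1, ht2, ht3⟩ := ht
    have heq : t = n * (t / n) + j := by
      rw [← ht2]; exact (Nat.div_add_mod t n).symm
    rw [Finset.mem_image]
    by_cases hji : j < i
    · have hq1 : 1 ≤ t / n := by
        rcases Nat.eq_zero_or_pos (t / n) with h | h
        · rw [h, Nat.mul_zero, Nat.zero_add] at heq; omega
        · exact h
      have hqr : t / n ≤ r := by
        by_contra h
        push_neg at h
        have h3 : r * n + n ≤ n * (t / n) := by
          have h4 : (r + 1) * n ≤ (t / n) * n := Nat.mul_le_mul_right n h
          rw [Nat.add_one_mul] at h4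
          rw [Nat.mul_comm n (t / n)]
          exact h4
        omega
      refine ⟨t / n - 1, Finset.mem_range.mpr (by omega), ?_⟩
      rw [if_pos hji]
      have h2 : t / n - 1 + 1 = t / n := by omega
      rw [h2, Nat.mul_comm]
      omega
    · push_neg at hji
      have hqr : t / n < r := by
        by_contra h
        push_neg at h
        have h3 : r * n ≤ n * (t / n) := by
          rw [Nat.mul_comm n (t / n)]; exact Nat.mul_le_mul_right n h
        omega
      refine ⟨t / n, Finset.mem_range.mpr hqr, ?_⟩
      rw [if_neg (Nat.not_lt.mpr hji), Nat.mul_comm]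
      omega
  calc _ ≤ _ := Finset.card_le_card hsub
    _ ≤ r := (Finset.card_image_le).trans (by simp)

/-- In Round-Robin with `n` agents and `m = k·n` goods, let `(A_1,…,A_n)` be the
allocation under `(≻_i, ≻_{−i})` and, for the deviating run `(≻'_i, ≻_{−i})`, let
`S'_r` be the goods allocated before agent `i`'s `(r+1)`-th pick (at turn `r·n + i`,
zero-indexed). Then every agent `j` receives at most `2(r−1)` goods of
`S'_{r−1} \ S'_0` in the original run: zero-indexed, `|A_j ∩ (S'_r \ S'_0)| ≤ 2r`
for all `r < k`. -/
theorem roundRobin_deviation_bundle_counting {n k : ℕ} (hn : 0 < n)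
    (goods : Finset G) (hm : goods.card = k * n)
    (pref : Fin n → List G) (i : Fin n) (l' : List G)
    (hvalid : ∀ j, ValidReport goods (pref j)) (hvalid' : ValidReport goods l') :
    ∀ r, r < k → ∀ j : Fin n,
      ((rrBundle hn pref goods j) ∩
        ((rrAllocatedBefore hn (Function.update pref i l') goods (r * n + i.val)) \
          (rrAllocatedBefore hn (Function.update pref i l') goods i.val))).card
        ≤ 2 * r := by
  intro r hr j
  set pref' := Function.update pref i l' with hpref'
  have hvalid2 : ∀ j, ValidReport goods (pref' j) := by
    intro j
    by_cases h : j = i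
    · subst h; simpa [hpref', Function.update_self] using hvalid'
    · rw [hpref', Function.update_of_ne h]; exact hvalid j
  have hagree : ∀ j, j ≠ i → pref j = pref' j := fun j h =>
    (Function.update_of_ne h _ _).symm
  set T : Finset ℕ :=
    (Finset.range (r * n + i.val)).filter (fun t => t % n = j.val ∧ i.val ≤ t) with hT
  set P : Finset G := T.biUnion (fun t => (rrPicked hn pref goods t).toFinset) with hP
  set D : Finset G := rrRemaining hn pref goods (r * n + i.val) \
    rrRemaining hn pref' goods (r * n + i.val) with hD
  have hsub : (rrBundle hn pref goods j) ∩
      ((rrAllocatedBefore hn pref' goods (r * n + i.val)) \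
        (rrAllocatedBefore hn pref' goods i.val)) ⊆ P ∪ D := by
    intro g hg
    rw [Finset.mem_inter, Finset.mem_sdiff] at hg
    obtain ⟨hgb, hgS, hgS0⟩ := hg
    rw [rrAllocatedBefore, Finset.mem_sdiff] at hgS
    obtain ⟨hggoods, hgR'⟩ := hgS
    -- g not allocated before turn i in the deviating run, hence g ∈ R i (original run)
    have hgRi : g ∈ rrRemaining hn pref goods i.val := by
      rw [rrAllocatedBefore, Finset.mem_sdiff] at hgS0
      push_neg at hgS0
      rw [prefix_eq hn pref goods hagree i.val le_rfl]
      exact hgS0 hggoods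
    -- obtain the turn at which j picked g
    rw [rrBundle, Finset.mem_biUnion] at hgb
    obtain ⟨t, htmem, hgt⟩ := hgb
    rw [Finset.mem_filter, Finset.mem_range] at htmem
    rw [Option.mem_toFinset, Option.mem_def] at hgt
    -- t ≥ i
    have hti : i.val ≤ t := by
      by_contra h
      push_neg at h
      have h1 : g ∉ rrRemaining hn pref goods (t + 1) :=
        not_mem_succ_of_picked hn pref goods hgt
      exact h1 (rrRemaining_antitone hn pref goods (by omega) hgRi)
    rcases Nat.lt_or_ge t (r * n + i.val) with hlt | hge
    · refine Finset.mem_union_left _ (Finset.mem_biUnion.mpr ⟨t, ?_, ?_⟩)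
      · rw [hT, Finset.mem_filter, Finset.mem_range]
        exact ⟨hlt, htmem.2, hti⟩
      · rw [Option.mem_toFinset, Option.mem_def]; exact hgt
    · refine Finset.mem_union_right _ (Finset.mem_sdiff.mpr ⟨?_, hgR'⟩)
      exact rrRemaining_antitone hn pref goods hge (mem_of_picked hn pref goods hgt)
  calc _ ≤ (P ∪ D).card := Finset.card_le_card hsub
    _ ≤ P.card + D.card := Finset.card_union_le _ _
    _ ≤ r + r := by
        refine Nat.add_le_add ?_ ?_
        · calc P.card ≤ T.card * 1 := Finset.card_biUnion_le_card_mul _ _ 1 (by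
              intro t _
              cases rrPicked hn pref goods t <;> simp)
            _ ≤ r := by
              rw [Nat.mul_one]
              exact other_turns_card hn i.isLt j.isLt
        · exact (diff_card_le hn pref goods hagree hvalid hvalid2 (r * n + i.val)).trans
            (own_turns_card hn i.isLt)
    _ = 2 * r := by omega
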